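/- arXiv:1808.05159 — 4 statements merged into one kernel-verified Lean document; each statement's English description precedes it below -/
import Mathlib

section
/- For every real number λ ≥ 0 and every s with 0 < s < 1, λ^s = (1/Γ(-s)) ∫₀^∞ (e^{-tλ} - 1) t^{-1-s} dt, where Γ(-s) = Γ(1-s)/(-s). -/
/-! Substituting `u = t * λ` pulls out the factor `λ ^ s`, so it suffices to treat `λ = 1`.
Integrating by parts against `d(-u ^ (-s) / s) = u ^ (-1 - s) du` turns
`∫ (exp (-u) - 1) u ^ (-1 - s)` into `-(1 / s) ∫ exp (-u) u ^ (-s) = -Γ(1 - s) / s = Γ(-s)`;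
the boundary terms vanish because `|exp (-u) - 1| ≤ min u 1`. -/

open MeasureTheory Real Set Filter Topology

lemma abs_exp_neg_sub_one_le_self {u : ℝ} (hu : 0 ≤ u) : |exp (-u) - 1| ≤ u := by
  have := add_one_le_exp (-u)
  rw [abs_sub_comm, abs_of_nonneg (by simpa using hu)]
  linarith

lemma abs_exp_neg_sub_one_le_one {u : ℝ} (hu : 0 ≤ u) : |exp (-u) - 1| ≤ 1 := by
  have := exp_pos (-u)
  rw [abs_sub_comm, abs_of_nonneg (by simpa using hu)]
  linarith

section

variable {s : ℝ}

lemma integrableOn_exp_neg_sub_one_mul_rpow (hs : 0 < s) (hs1 : s < 1) :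
    IntegrableOn (fun u => (exp (-u) - 1) * u ^ (-1 - s)) (Ioi 0) := by
  have hmeas : ∀ {I : Set ℝ}, MeasurableSet I →
      AEStronglyMeasurable (fun u => (exp (-u) - 1) * u ^ (-1 - s)) (volume.restrict I) :=
    fun _ => by fun_prop
  rw [← Ioc_union_Ioi_eq_Ioi zero_le_one]
  refine IntegrableOn.union ?_ ?_
  · refine (intervalIntegral.intervalIntegrable_rpow' (a := 0) (b := 1)
      (show -1 < -s by linarith)).1.mono' (hmeas measurableSet_Ioc) ?_
    filter_upwards [ae_restrict_mem measurableSet_Ioc] with u ⟨hu, _⟩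
    calc ‖(exp (-u) - 1) * u ^ (-1 - s)‖ = |exp (-u) - 1| * u ^ (-1 - s) := by
          rw [norm_mul, norm_of_nonneg (rpow_nonneg hu.le _), norm_eq_abs]
      _ ≤ u * u ^ (-1 - s) := by gcongr; exact abs_exp_neg_sub_one_le_self hu.le
      _ = u ^ (-s) := by rw [← rpow_one_add' hu.le (by linarith)]; ring_nf
  · refine (integrableOn_Ioi_rpow_of_lt (show -1 - s < -1 by linarith) one_pos).mono'
      (hmeas measurableSet_Ioi) ?_
    filter_upwards [ae_restrict_mem measurableSet_Ioi] with u (hu : 1 < u)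
    have hu0 : 0 ≤ u := zero_le_one.trans hu.le
    calc ‖(exp (-u) - 1) * u ^ (-1 - s)‖ = |exp (-u) - 1| * u ^ (-1 - s) := by
          rw [norm_mul, norm_of_nonneg (rpow_nonneg hu0 _), norm_eq_abs]
      _ ≤ 1 * u ^ (-1 - s) := by gcongr; exact abs_exp_neg_sub_one_le_one hu0
      _ = u ^ (-1 - s) := one_mul _

lemma Gamma_one_sub_eq (hs : s ≠ 0) : Gamma (1 - s) = -s * Gamma (-s) := by
  rw [← Gamma_add_one (neg_ne_zero.mpr hs)]
  ring_nf

lemma Gamma_neg_lt_zero (hs : 0 < s) (hs1 : s < 1) : Gamma (-s) < 0 := by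
  have h := Gamma_pos_of_pos (sub_pos.mpr hs1)
  rw [Gamma_one_sub_eq hs.ne'] at h
  nlinarith

lemma integral_exp_neg_sub_one_mul_rpow (hs : 0 < s) (hs1 : s < 1) :
    ∫ u in Ioi 0, (exp (-u) - 1) * u ^ (-1 - s) = Gamma (-s) := by
  have hv : ∀ t ∈ Ioi (0 : ℝ), HasDerivAt (fun t => -t ^ (-s) / s) (t ^ (-1 - s)) t := by
    intro t (ht : 0 < t)
    refine ((hasDerivAt_rpow_const (p := -s) (Or.inl ht.ne')).neg.div_const s).congr_deriv ?_
    rw [neg_mul, neg_neg, mul_div_cancel_left₀ _ hs.ne']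
    ring_nf
  have hu : ∀ t ∈ Ioi (0 : ℝ), HasDerivAt (fun t => exp (-t) - 1) (-exp (-t)) t := fun t _ => by
    simpa using ((hasDerivAt_neg t).exp).sub_const 1
  have hu'v : IntegrableOn (fun t => -exp (-t) * (-t ^ (-s) / s)) (Ioi 0) := by
    have := (GammaIntegral_convergent (sub_pos.mpr hs1)).div_const s
    rw [sub_sub_cancel_left] at this
    exact IntegrableOn.congr_fun this (fun t _ => by ring) measurableSet_Ioi
  have h_zero : Tendsto (fun t => (exp (-t) - 1) * (-t ^ (-s) / s)) (𝓝[>] 0) (𝓝 0) := by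
    have hbound : Tendsto (fun t : ℝ => t ^ (1 - s) / s) (𝓝[>] 0) (𝓝 0) := by
      have := (continuousAt_rpow_const 0 (1 - s) (Or.inr (by linarith))).tendsto.div_const s
      rw [zero_rpow (by linarith), zero_div] at this
      exact this.mono_left nhdsWithin_le_nhds
    refine squeeze_zero_norm' ?_ hbound
    filter_upwards [self_mem_nhdsWithin] with t (ht : 0 < t)
    calc ‖(exp (-t) - 1) * (-t ^ (-s) / s)‖ = |exp (-t) - 1| * t ^ (-s) / s := by
          rw [norm_mul, norm_div, norm_neg, norm_of_nonneg (rpow_nonneg ht.le _),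
            norm_of_nonneg hs.le, norm_eq_abs, mul_div_assoc]
      _ ≤ t * t ^ (-s) / s := by gcongr; exact abs_exp_neg_sub_one_le_self ht.le
      _ = t ^ (1 - s) / s := by rw [← rpow_one_add' ht.le (by linarith)]; ring_nf
  have h_infty : Tendsto (fun t => (exp (-t) - 1) * (-t ^ (-s) / s)) atTop (𝓝 0) := by
    simpa using (tendsto_exp_neg_atTop_nhds_zero.sub_const 1).mul
      ((tendsto_rpow_neg_atTop hs).neg.div_const s)
  rw [integral_Ioi_mul_deriv_eq_deriv_mul hu hv (integrableOn_exp_neg_sub_one_mul_rpow hs hs1)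
    hu'v h_zero h_infty]
  have hGamma : ∫ t in Ioi 0, -exp (-t) * (-t ^ (-s) / s) = Gamma (1 - s) / s := by
    rw [Gamma_eq_integral (sub_pos.mpr hs1), ← integral_div]
    refine setIntegral_congr_fun measurableSet_Ioi fun t _ => ?_
    rw [sub_sub_cancel_left]
    ring
  rw [hGamma, Gamma_one_sub_eq hs.ne']
  field_simp
  ring

end

lemma integral_comp_mul_right_mul_rpow_Ioi (f : ℝ → ℝ) (r : ℝ) {c : ℝ} (hc : 0 < c) :
    ∫ t in Ioi 0, f (t * c) * t ^ r = c ^ (-1 - r) * ∫ u in Ioi 0, f u * u ^ r := by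
  have hscale : ∀ t ∈ Ioi (0 : ℝ), f (t * c) * t ^ r = c ^ (-r) * (f (t * c) * (t * c) ^ r) := by
    intro t (ht : 0 < t)
    rw [mul_rpow ht.le hc.le, rpow_neg hc.le]
    field_simp
  rw [setIntegral_congr_fun measurableSet_Ioi hscale, integral_const_mul,
    integral_comp_mul_right_Ioi (fun u => f u * u ^ r) 0 hc, zero_mul, smul_eq_mul, ← mul_assoc,
    ← rpow_neg_one, ← rpow_add hc]
  ring_nf

theorem gamma_integral_positive_power (lam s : ℝ) (hlam : 0 ≤ lam) (hs : 0 < s) (hs1 : s < 1) :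
    lam ^ s = (1 / Real.Gamma (-s)) *
      ∫ t in Set.Ioi (0:ℝ), (Real.exp (-t * lam) - 1) * t ^ (-1 - s) := by
  rcases hlam.eq_or_lt with rfl | hlam
  · simp [zero_rpow hs.ne']
  · simp only [neg_mul]
    rw [integral_comp_mul_right_mul_rpow_Ioi (fun u => exp (-u) - 1) (-1 - s) hlam,
      integral_exp_neg_sub_one_mul_rpow hs hs1]
    field_simp [(Gamma_neg_lt_zero hs hs1).ne]
    ring_nf
end

section
/- Let u : ℝⁿ → ℝ be nonnegative and Schwartz class, and suppose u(x₀) = 0 at some point x₀ ∈ ℝⁿ. Then (-Δ)^s u(x₀) ≤ 0, where (-Δ)^s u(x₀) = (1/Γ(-s)) ∫₀^∞ (e^{tΔ}u(x₀) - u(x₀)) t^{-1-s} dt with 0 < s < 1. Moreover, (-Δ)^s u(x₀) = 0 if and only if u ≡ 0. -/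
/-!
Since `Γ(-s) < 0` and `e^{tΔ}u(x₀) ≥ 0 = u(x₀)`, the expression is nonpositive. If it vanishes,
the nonnegative integrand `e^{tΔ}u(x₀) t^{-1-s}` has integral zero, so it vanishes at some `t > 0`
provided it is integrable; positivity of the heat kernel then forces `u ≡ 0`. Integrability at
infinity comes from `e^{tΔ}u(x₀) ≤ ‖u‖₁`; near `t = 0` it comes from `e^{tΔ}u(x₀) = O(t)`, because
at the minimum `x₀` the bounded Hessian of `u` gives `u(z) ≤ C‖z - x₀‖²`, and the heat kernel has
second moment `O(t)`.
-/

open MeasureTheory Real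

noncomputable section

def heatKernel (n : ℕ) (t : ℝ) (x : EuclideanSpace ℝ (Fin n)) : ℝ :=
  (4 * π * t) ^ (-(n : ℝ) / 2) * exp (-‖x‖ ^ 2 / (4 * t))

def heatSemigroup (n : ℕ) (t : ℝ) (f : EuclideanSpace ℝ (Fin n) → ℝ)
    (x : EuclideanSpace ℝ (Fin n)) : ℝ :=
  ∫ z, heatKernel n t (x - z) * f z

end

section HeatKernel

variable {n : ℕ} {t : ℝ}

theorem heatKernel_pos (ht : 0 < t) (x : EuclideanSpace ℝ (Fin n)) : 0 < heatKernel n t x := by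
  unfold heatKernel; positivity

theorem heatKernel_nonneg (ht : 0 ≤ t) (x : EuclideanSpace ℝ (Fin n)) :
    0 ≤ heatKernel n t x := by
  unfold heatKernel; positivity

theorem continuous_heatKernel (n : ℕ) (t : ℝ) : Continuous (heatKernel n t) := by
  unfold heatKernel; fun_prop

theorem heatKernel_le (ht : 0 < t) (x : EuclideanSpace ℝ (Fin n)) :
    heatKernel n t x ≤ (4 * π * t) ^ (-(n : ℝ) / 2) := by
  refine mul_le_of_le_one_right (by positivity) (exp_le_one_iff.mpr ?_)
  exact div_nonpos_of_nonpos_of_nonneg (by nlinarith [sq_nonneg ‖x‖]) (by positivity)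

theorem heatKernel_le_one (ht : 1 ≤ t) (x : EuclideanSpace ℝ (Fin n)) : heatKernel n t x ≤ 1 :=
  (heatKernel_le (by linarith) x).trans <| rpow_le_one_of_one_le_of_nonpos
    (by nlinarith [pi_gt_three]) (by rw [neg_div]; exact neg_nonpos.mpr (by positivity))

theorem integral_heatKernel (ht : 0 < t) : ∫ x, heatKernel n t x = 1 := by
  have hexp : ∀ x : EuclideanSpace ℝ (Fin n),
      exp (-‖x‖ ^ 2 / (4 * t)) = exp (-(1 / (4 * t)) * ‖x‖ ^ 2) := fun x => by
    congr 1; ring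
  simp only [heatKernel, hexp, integral_const_mul,
    GaussianFourier.integral_rexp_neg_mul_sq_norm (one_div_pos.mpr (by positivity : 0 < 4 * t)),
    finrank_euclideanSpace_fin]
  rw [show π / (1 / (4 * t)) = 4 * π * t by field_simp, neg_div, rpow_neg (by positivity),
    inv_mul_cancel₀ (by positivity)]

-- A non-integrable function has Bochner integral `0`.
theorem integrable_heatKernel (ht : 0 < t) : Integrable (heatKernel n t) :=
  Integrable.of_integral_ne_zero (by rw [integral_heatKernel ht]; exact one_ne_zero)

theorem heatKernel_mul_norm_sq_le (ht : 0 < t) (x : EuclideanSpace ℝ (Fin n)) :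
    heatKernel n t x * ‖x‖ ^ 2 ≤ 2 ^ ((n : ℝ) / 2) * (8 * t) * heatKernel n (2 * t) x := by
  set y := ‖x‖ ^ 2 / (8 * t)
  have hcoef : 2 ^ ((n : ℝ) / 2) * (4 * π * (2 * t)) ^ (-(n : ℝ) / 2) =
      (4 * π * t) ^ (-(n : ℝ) / 2) := by
    rw [show 4 * π * (2 * t) = 2 * (4 * π * t) by ring, mul_rpow (by norm_num) (by positivity),
      ← mul_assoc, neg_div, rpow_neg (by norm_num : (0 : ℝ) ≤ 2), mul_inv_cancel₀ (by positivity),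
      one_mul]
  have hy : y * exp (-y) ≤ 1 := (mul_exp_neg_le_exp_neg_one y).trans (by simp)
  calc heatKernel n t x * ‖x‖ ^ 2
      = (4 * π * t) ^ (-(n : ℝ) / 2) * (8 * t) * exp (-y) * (y * exp (-y)) := by
        rw [heatKernel, show -‖x‖ ^ 2 / (4 * t) = -y + -y by simp only [y]; field_simp; ring,
          exp_add]
        simp only [y]; field_simp
    _ ≤ (4 * π * t) ^ (-(n : ℝ) / 2) * (8 * t) * exp (-y) :=
        mul_le_of_le_one_right (by positivity) hy
    _ = 2 ^ ((n : ℝ) / 2) * (8 * t) * heatKernel n (2 * t) x := by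
        rw [heatKernel, ← hcoef, show -‖x‖ ^ 2 / (4 * (2 * t)) = -y by simp only [y]; ring_nf]; ring

variable {f : EuclideanSpace ℝ (Fin n) → ℝ}

theorem integrable_heatKernel_mul (ht : 0 < t) (x : EuclideanSpace ℝ (Fin n))
    (hf : Integrable f) : Integrable fun z => heatKernel n t (x - z) * f z :=
  hf.bdd_mul (c := (4 * π * t) ^ (-(n : ℝ) / 2))
    ((continuous_heatKernel n t).comp (continuous_sub_left x)).aestronglyMeasurable
    (Filter.Eventually.of_forall fun z => by
      rw [norm_of_nonneg (heatKernel_nonneg ht.le _)]; exact heatKernel_le ht _)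

theorem heatSemigroup_nonneg (ht : 0 ≤ t) (hf : ∀ z, 0 ≤ f z) (x : EuclideanSpace ℝ (Fin n)) :
    0 ≤ heatSemigroup n t f x :=
  integral_nonneg fun z => mul_nonneg (heatKernel_nonneg ht _) (hf z)

theorem heatSemigroup_le_integral (ht : 1 ≤ t) (hf : ∀ z, 0 ≤ f z) (hf_int : Integrable f)
    (x : EuclideanSpace ℝ (Fin n)) : heatSemigroup n t f x ≤ ∫ z, f z :=
  integral_mono_of_nonneg
    (Filter.Eventually.of_forall fun z => mul_nonneg (heatKernel_nonneg (by linarith) _) (hf z))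
    hf_int (Filter.Eventually.of_forall fun z =>
      mul_le_of_le_one_left (hf z) (heatKernel_le_one ht _))

theorem heatSemigroup_le_of_le_mul_norm_sq {C : ℝ} (ht : 0 < t) (hC : 0 ≤ C)
    (hf : ∀ z, 0 ≤ f z) (x : EuclideanSpace ℝ (Fin n)) (hfx : ∀ z, f z ≤ C * ‖z - x‖ ^ 2) :
    heatSemigroup n t f x ≤ 2 ^ ((n : ℝ) / 2) * (8 * t) * C := by
  have hdom : Integrable fun z => 2 ^ ((n : ℝ) / 2) * (8 * t) * C * heatKernel n (2 * t) (x - z) :=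
    ((integrable_heatKernel (by positivity)).comp_sub_left x).const_mul _
  calc heatSemigroup n t f x
      ≤ ∫ z, 2 ^ ((n : ℝ) / 2) * (8 * t) * C * heatKernel n (2 * t) (x - z) := by
        refine integral_mono_of_nonneg (Filter.Eventually.of_forall fun z =>
          mul_nonneg (heatKernel_nonneg ht.le _) (hf z)) hdom
          (Filter.Eventually.of_forall fun z => ?_)
        calc heatKernel n t (x - z) * f z ≤ heatKernel n t (x - z) * (C * ‖x - z‖ ^ 2) := by
              rw [norm_sub_rev]; exact mul_le_mul_of_nonneg_left (hfx z) (heatKernel_nonneg ht.le _)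
          _ = C * (heatKernel n t (x - z) * ‖x - z‖ ^ 2) := by ring
          _ ≤ C * (2 ^ ((n : ℝ) / 2) * (8 * t) * heatKernel n (2 * t) (x - z)) :=
              mul_le_mul_of_nonneg_left (heatKernel_mul_norm_sq_le ht _) hC
          _ = _ := by ring
    _ = 2 ^ ((n : ℝ) / 2) * (8 * t) * C := by
        rw [integral_const_mul, integral_sub_left_eq_self (heatKernel n (2 * t)),
          integral_heatKernel (by positivity), mul_one]

theorem stronglyMeasurable_heatSemigroup (hf : Measurable f) (x : EuclideanSpace ℝ (Fin n)) :
    StronglyMeasurable fun t => heatSemigroup n t f x := by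
  have : Measurable fun p : ℝ × EuclideanSpace ℝ (Fin n) => heatKernel n p.1 (x - p.2) * f p.2 := by
    unfold heatKernel; fun_prop
  exact this.stronglyMeasurable.integral_prod_right'

theorem eq_zero_of_heatSemigroup_eq_zero (ht : 0 < t) (hf : Continuous f) (hf_int : Integrable f)
    (hf0 : ∀ z, 0 ≤ f z) {x : EuclideanSpace ℝ (Fin n)} (h : heatSemigroup n t f x = 0) :
    f = 0 := by
  have hcont : Continuous fun z => heatKernel n t (x - z) * f z :=
    ((continuous_heatKernel n t).comp (continuous_sub_left x)).mul hf
  have hae := (integral_eq_zero_iff_of_nonneg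
    (fun z => mul_nonneg (heatKernel_nonneg ht.le _) (hf0 z))
    (integrable_heatKernel_mul ht x hf_int)).mp h
  funext z
  have hz := congrFun ((hcont.ae_eq_iff_eq volume continuous_const).mp hae) z
  exact (mul_eq_zero.mp hz).resolve_left (heatKernel_pos ht _).ne'

end HeatKernel

theorem Real.Gamma_lt_zero_of_mem_Ioo {x : ℝ} (hx : x ∈ Set.Ioo (-1) 0) : Gamma x < 0 := by
  have h : Gamma (x + 1) = x * Gamma x := Gamma_add_one hx.2.ne
  have : 0 < Gamma (x + 1) := Gamma_pos_of_pos (by linarith [hx.1])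
  nlinarith [hx.2]

theorem norm_sub_le_of_fderiv_eq_zero_of_norm_fderiv_fderiv_le {E F : Type*}
    [NormedAddCommGroup E] [NormedSpace ℝ E] [NormedAddCommGroup F] [NormedSpace ℝ F]
    {f : E → F} {B : ℝ} {x₀ : E} (hf : Differentiable ℝ f) (hf' : Differentiable ℝ (fderiv ℝ f))
    (hB : ∀ x, ‖fderiv ℝ (fderiv ℝ f) x‖ ≤ B) (h₀ : fderiv ℝ f x₀ = 0) (z : E) :
    ‖f z - f x₀‖ ≤ B * ‖z - x₀‖ ^ 2 := by
  have hlin : ∀ y, ‖fderiv ℝ f y‖ ≤ B * ‖y - x₀‖ := fun y => by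
    simpa [h₀] using Convex.norm_image_sub_le_of_norm_fderiv_le (fun y _ => hf'.differentiableAt)
      (fun y _ => hB y) convex_univ (Set.mem_univ x₀) (Set.mem_univ y)
  have hball : ∀ y ∈ Metric.closedBall x₀ ‖z - x₀‖, ‖fderiv ℝ f y‖ ≤ B * ‖z - x₀‖ := fun y hy =>
    (hlin y).trans (mul_le_mul_of_nonneg_left (by rwa [← dist_eq_norm])
      ((norm_nonneg (fderiv ℝ (fderiv ℝ f) x₀)).trans (hB x₀)))
  calc ‖f z - f x₀‖ ≤ B * ‖z - x₀‖ * ‖z - x₀‖ :=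
        Convex.norm_image_sub_le_of_norm_fderiv_le (fun y _ => hf.differentiableAt) hball
          (convex_closedBall _ _) (Metric.mem_closedBall_self (norm_nonneg _))
          (by rw [Metric.mem_closedBall, dist_eq_norm])
    _ = B * ‖z - x₀‖ ^ 2 := by ring

theorem SchwartzMap.exists_norm_sub_le_mul_norm_sub_sq {E F : Type*}
    [NormedAddCommGroup E] [NormedSpace ℝ E] [NormedAddCommGroup F] [NormedSpace ℝ F]
    (u : SchwartzMap E F) {x₀ : E} (h₀ : fderiv ℝ u x₀ = 0) :
    ∃ C, 0 ≤ C ∧ ∀ z, ‖u z - u x₀‖ ≤ C * ‖z - x₀‖ ^ 2 := by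
  obtain ⟨B, hB0, hB⟩ := u.decay 0 2
  have hB' : ∀ x, ‖fderiv ℝ (fderiv ℝ u) x‖ ≤ B := fun x => by
    rw [← norm_iteratedFDeriv_zero (𝕜 := ℝ) (f := fderiv ℝ (fderiv ℝ u)),
      norm_iteratedFDeriv_fderiv, norm_iteratedFDeriv_fderiv]
    simpa using hB x
  have hu' : Differentiable ℝ (fderiv ℝ u) :=
    ((u.smooth 2).fderiv_right (m := 1) (by norm_num)).differentiable (by norm_num)
  exact ⟨B, hB0.le,
    norm_sub_le_of_fderiv_eq_zero_of_norm_fderiv_fderiv_le u.differentiable hu' hB' h₀⟩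

theorem integrableOn_Ioi_mul_rpow_neg_one_sub {f : ℝ → ℝ} {s C A : ℝ} (hs : 0 < s) (hs1 : s < 1)
    (hf : AEStronglyMeasurable f (volume.restrict (Set.Ioi 0)))
    (h0 : ∀ t ∈ Set.Ioc 0 1, ‖f t‖ ≤ C * t) (h1 : ∀ t ∈ Set.Ioi 1, ‖f t‖ ≤ A) :
    IntegrableOn (fun t => f t * t ^ (-1 - s)) (Set.Ioi 0) := by
  have hmeas : AEStronglyMeasurable (fun t => f t * t ^ (-1 - s)) (volume.restrict (Set.Ioi 0)) :=
    hf.mul (by fun_prop : Measurable fun t : ℝ => t ^ (-1 - s)).aestronglyMeasurable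
  rw [← Set.Ioc_union_Ioi_eq_Ioi zero_le_one]
  refine IntegrableOn.union ?_ ?_
  · have hdom : IntegrableOn (fun t : ℝ => C * t ^ (-s)) (Set.Ioc 0 1) := by
      have := intervalIntegral.intervalIntegrable_rpow' (a := 0) (b := 1) (r := -s) (by linarith)
      rw [intervalIntegrable_iff_integrableOn_Ioc_of_le zero_le_one] at this
      exact this.const_mul C
    refine hdom.mono' (hmeas.mono_set Set.Ioc_subset_Ioi_self)
      ((ae_restrict_iff' measurableSet_Ioc).mpr (Filter.Eventually.of_forall fun t ht => ?_))
    rw [norm_mul, norm_of_nonneg (rpow_nonneg ht.1.le _)]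
    calc ‖f t‖ * t ^ (-1 - s) ≤ C * t * t ^ (-1 - s) :=
          mul_le_mul_of_nonneg_right (h0 t ht) (rpow_nonneg ht.1.le _)
      _ = C * t ^ (-s) := by
          rw [mul_assoc, ← rpow_one_add' ht.1.le (by linarith), show 1 + (-1 - s) = -s by ring]
  · refine ((integrableOn_Ioi_rpow_of_lt (by linarith : -1 - s < -1) one_pos).const_mul A).mono'
      (hmeas.mono_set (Set.Ioi_subset_Ioi zero_le_one))
      ((ae_restrict_iff' measurableSet_Ioi).mpr (Filter.Eventually.of_forall fun t ht => ?_))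
    have ht0 : (0 : ℝ) < t := one_pos.trans ht
    rw [norm_mul, norm_of_nonneg (rpow_nonneg ht0.le _)]
    exact mul_le_mul_of_nonneg_right (h1 t ht) (rpow_nonneg ht0.le _)

theorem exists_eq_zero_of_setIntegral_eq_zero {α : Type*} [MeasurableSpace α] {μ : Measure α}
    {s : Set α} {f : α → ℝ} (hs : MeasurableSet s) (hμ : μ s ≠ 0) (hf : IntegrableOn f s μ)
    (hf0 : ∀ x ∈ s, 0 ≤ f x) (h : ∫ x in s, f x ∂μ = 0) : ∃ x ∈ s, f x = 0 := by
  by_contra! hne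
  have hsupp : Function.support f ∩ s = s := Set.inter_eq_right.mpr fun x hx => hne x hx
  have := (setIntegral_pos_iff_support_of_nonneg_ae
    ((ae_restrict_iff' hs).mpr (Filter.Eventually.of_forall hf0)) hf).mpr
    (by rw [hsupp]; exact pos_iff_ne_zero.mpr hμ)
  exact this.ne' h

theorem fractional_laplacian_maximum_principle (n : ℕ)
    (u : SchwartzMap (EuclideanSpace ℝ (Fin n)) ℝ)
    (hu : ∀ x, 0 ≤ u x) (x₀ : EuclideanSpace ℝ (Fin n)) (hx₀ : u x₀ = 0)
    (s : ℝ) (hs : 0 < s) (hs1 : s < 1) :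
    ((1 / Real.Gamma (-s)) *
        ∫ t in Set.Ioi (0:ℝ),
          ((∫ z : EuclideanSpace ℝ (Fin n),
              (4 * Real.pi * t) ^ (-(n:ℝ)/2) * Real.exp (-‖x₀ - z‖^2 / (4*t)) * u z)
            - u x₀) * t ^ (-1 - s) ≤ 0) ∧
    (((1 / Real.Gamma (-s)) *
        ∫ t in Set.Ioi (0:ℝ),
          ((∫ z : EuclideanSpace ℝ (Fin n),
              (4 * Real.pi * t) ^ (-(n:ℝ)/2) * Real.exp (-‖x₀ - z‖^2 / (4*t)) * u z)
            - u x₀) * t ^ (-1 - s) = 0) ↔ ∀ x, u x = 0) := by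
  change (1 / Gamma (-s) * ∫ t in Set.Ioi 0, (heatSemigroup n t u x₀ - u x₀) * t ^ (-1 - s) ≤ 0) ∧
    (1 / Gamma (-s) * ∫ t in Set.Ioi 0, (heatSemigroup n t u x₀ - u x₀) * t ^ (-1 - s) = 0 ↔ _)
  have hΓ : 1 / Gamma (-s) < 0 :=
    one_div_neg.mpr (Gamma_lt_zero_of_mem_Ioo ⟨by linarith, by linarith⟩)
  have hF : ∀ t ∈ Set.Ioi (0 : ℝ), 0 ≤ heatSemigroup n t u x₀ * t ^ (-1 - s) := fun t ht =>
    mul_nonneg (heatSemigroup_nonneg (le_of_lt ht) hu x₀) (rpow_nonneg (le_of_lt ht) _)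
  simp only [hx₀, sub_zero]
  refine ⟨mul_nonpos_of_nonpos_of_nonneg hΓ.le (setIntegral_nonneg measurableSet_Ioi hF),
    fun h => ?_, fun h => by simp [heatSemigroup, h]⟩
  obtain ⟨C, hC, hCu⟩ := u.exists_norm_sub_le_mul_norm_sub_sq
    (IsLocalMin.fderiv_eq_zero (Filter.Eventually.of_forall fun y => hx₀ ▸ hu y))
  have hint := integrableOn_Ioi_mul_rpow_neg_one_sub hs hs1
    (stronglyMeasurable_heatSemigroup u.continuous.measurable x₀).aestronglyMeasurable
    (C := 2 ^ ((n : ℝ) / 2) * 8 * C) (A := ∫ z, u z)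
    (fun t ht => by
      rw [norm_of_nonneg (heatSemigroup_nonneg ht.1.le hu x₀)]
      refine (heatSemigroup_le_of_le_mul_norm_sq ht.1 hC hu x₀ fun z => ?_).trans_eq (by ring)
      simpa [hx₀, abs_of_nonneg (hu z)] using hCu z)
    (fun t ht => by
      rw [norm_of_nonneg (heatSemigroup_nonneg (by linarith [ht.out]) hu x₀)]
      exact heatSemigroup_le_integral ht.out.le hu u.integrable x₀)
  obtain ⟨t, ht, hFt⟩ := exists_eq_zero_of_setIntegral_eq_zero measurableSet_Ioi (by simp) hint hF
    ((mul_eq_zero.mp h).resolve_left hΓ.ne)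
  have hKt := (mul_eq_zero.mp hFt).resolve_right (rpow_pos_of_pos ht _).ne'
  exact congrFun (eq_zero_of_heatSemigroup_eq_zero ht u.continuous u.integrable hu hKt)
end

section
/- For every z ∈ ℝⁿ with z ≠ 0, ∫₀^1 (e^{-r|z|²} - 1) r^{-1} dr + ∫₁^∞ e^{-r|z|²} r^{-1} dr = -log(|z|²) + ∫₀^∞ e^{-r} log r dr = -2log|z| - γ, where γ is the Euler–Mascheroni constant. -/
/-!
Since `dr / r` is invariant under `r ↦ r a`, the left side equals
`∫₀^a (e^{-u} - 1) / u du + ∫_a^∞ e^{-u} / u du`. Integrating both pieces by parts against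
`log u` leaves the boundary terms `(e^{-a} - 1) log a` and `-e^{-a} log a`, which add up to
`-log a`, and the integrals `∫₀^a e^{-u} log u du` and `∫_a^∞ e^{-u} log u du`, which add up to
the constant.
-/

open MeasureTheory Real Set Filter
open scoped Topology

namespace LogKernel

lemma abs_exp_neg_sub_one_le {u : ℝ} (hu : 0 ≤ u) : |exp (-u) - 1| ≤ u := by
  have hle : exp (-u) ≤ 1 := exp_le_one_iff.2 (neg_nonpos.2 hu)
  have hge : -u + 1 ≤ exp (-u) := add_one_le_exp (-u)
  rw [abs_of_nonpos (by linarith)]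
  linarith

lemma intervalIntegrable_exp_neg_sub_one_div {a : ℝ} (ha : 0 ≤ a) :
    IntervalIntegrable (fun u => (exp (-u) - 1) / u) volume 0 a := by
  rw [intervalIntegrable_iff_integrableOn_Ioc_of_le ha]
  refine Measure.integrableOn_of_bounded (M := 1) measure_Ioc_lt_top.ne
    (by fun_prop : Measurable fun u => (exp (-u) - 1) / u).aestronglyMeasurable ?_
  filter_upwards [ae_restrict_mem measurableSet_Ioc] with u hu
  rw [norm_div, norm_of_nonneg hu.1.le, Real.norm_eq_abs]
  exact div_le_one_of_le₀ (abs_exp_neg_sub_one_le hu.1.le) hu.1.le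

lemma integrableOn_exp_neg_div_Ioi {a : ℝ} (ha : 0 < a) :
    IntegrableOn (fun u => exp (-u) / u) (Ioi a) := by
  refine ((exp_neg_integrableOn_Ioi a one_pos).const_mul a⁻¹).mono'
    (by fun_prop : Measurable fun u => exp (-u) / u).aestronglyMeasurable ?_
  filter_upwards [ae_restrict_mem measurableSet_Ioi] with u (hu : a < u)
  rw [norm_div, norm_of_nonneg (exp_pos _).le, norm_of_nonneg (ha.trans hu).le, neg_one_mul,
    ← div_eq_inv_mul]
  gcongr

lemma integrableOn_exp_neg_mul_log_Ioi :
    IntegrableOn (fun u => exp (-u) * log u) (Ioi 0) := by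
  rw [← Ioc_union_Ioi_eq_Ioi zero_le_one, integrableOn_union]
  constructor
  · rw [← intervalIntegrable_iff_integrableOn_Ioc_of_le zero_le_one]
    exact intervalIntegral.intervalIntegrable_log'.continuousOn_mul (by fun_prop)
  · have hGamma : IntegrableOn (fun u => exp (-u) * u ^ ((2 : ℝ) - 1)) (Ioi 1) :=
      (GammaIntegral_convergent two_pos).mono_set (Ioi_subset_Ioi zero_le_one)
    refine hGamma.mono' ?_ ?_
    · exact ContinuousOn.aestronglyMeasurable
        (by fun_prop (disch := intro u (hu : 1 < u); positivity)) measurableSet_Ioi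
    · filter_upwards [ae_restrict_mem measurableSet_Ioi] with u (hu : 1 < u)
      rw [norm_mul, norm_of_nonneg (exp_pos _).le, norm_of_nonneg (log_nonneg hu.le)]
      norm_num
      gcongr
      linarith [log_le_sub_one_of_pos (zero_lt_one.trans hu)]

lemma tendsto_exp_neg_sub_one_mul_log_nhdsGT_zero :
    Tendsto (fun u => (exp (-u) - 1) * log u) (𝓝[>] 0) (𝓝 0) := by
  have hmul_log : Tendsto (fun u => u * log u) (𝓝[>] 0) (𝓝 0) := by
    simpa using (continuous_mul_log.tendsto 0).mono_left nhdsWithin_le_nhds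
  refine squeeze_zero_norm' ?_ (by simpa using hmul_log.norm)
  filter_upwards [self_mem_nhdsWithin] with u (hu : 0 < u)
  rw [norm_mul, Real.norm_eq_abs, Real.norm_eq_abs, abs_of_pos hu]
  gcongr
  exact abs_exp_neg_sub_one_le hu.le

lemma tendsto_exp_neg_mul_log_atTop : Tendsto (fun u => exp (-u) * log u) atTop (𝓝 0) := by
  refine squeeze_zero_norm' ?_ (by simpa using tendsto_pow_mul_exp_neg_atTop_nhds_zero 1)
  filter_upwards [eventually_ge_atTop 1] with u hu
  rw [norm_mul, norm_of_nonneg (exp_pos _).le, norm_of_nonneg (log_nonneg hu), mul_comm u]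
  gcongr
  linarith [log_le_sub_one_of_pos (zero_lt_one.trans_le hu)]

lemma integral_exp_neg_sub_one_div {a : ℝ} (ha : 0 < a) :
    ∫ u in 0..a, (exp (-u) - 1) / u
      = (exp (-a) - 1) * log a + ∫ u in 0..a, exp (-u) * log u := by
  have hG : IntervalIntegrable (fun u => exp (-u) * log u) volume 0 a :=
    intervalIntegral.intervalIntegrable_log'.continuousOn_mul (by fun_prop)
  have hparts : ∫ u in 0..a, ((exp (-u) - 1) / u - exp (-u) * log u)
      = (exp (-a) - 1) * log a - 0 := by
    refine intervalIntegral.integral_eq_sub_of_hasDerivAt_of_tendsto ha (fun u hu => ?_)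
      ((intervalIntegrable_exp_neg_sub_one_div ha.le).sub hG)
      tendsto_exp_neg_sub_one_mul_log_nhdsGT_zero
      ((ContinuousAt.fun_mul (by fun_prop) (continuousAt_log ha.ne')).tendsto.mono_left
        nhdsWithin_le_nhds)
    refine (((hasDerivAt_neg u).exp.sub_const 1).fun_mul (hasDerivAt_log hu.1.ne')).congr_deriv ?_
    ring
  rw [intervalIntegral.integral_sub (intervalIntegrable_exp_neg_sub_one_div ha.le) hG] at hparts
  linarith

lemma integral_Ioi_exp_neg_div {a : ℝ} (ha : 0 < a) :
    ∫ u in Ioi a, exp (-u) / u = -(exp (-a) * log a) + ∫ u in Ioi a, exp (-u) * log u := by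
  have hG := integrableOn_exp_neg_mul_log_Ioi.mono_set (Ioi_subset_Ioi ha.le)
  have hparts : ∫ u in Ioi a, (exp (-u) / u - exp (-u) * log u) = 0 - exp (-a) * log a := by
    refine integral_Ioi_of_hasDerivAt_of_tendsto'
      (f' := fun u => exp (-u) / u - exp (-u) * log u) (fun u hu => ?_)
      ((integrableOn_exp_neg_div_Ioi ha).sub hG) tendsto_exp_neg_mul_log_atTop
    refine ((hasDerivAt_neg u).exp.fun_mul (hasDerivAt_log (ha.trans_le hu).ne')).congr_deriv ?_
    ring
  rw [integral_sub (integrableOn_exp_neg_div_Ioi ha) hG] at hparts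
  linarith

lemma integral_comp_mul_div_self (f : ℝ → ℝ) {c : ℝ} (hc : c ≠ 0) (a b : ℝ) :
    ∫ r in a..b, f (r * c) / r = ∫ u in a * c..b * c, f u / u := by
  rw [← intervalIntegral.mul_integral_comp_mul_right, ← intervalIntegral.integral_const_mul]
  congr 1 with r
  rcases eq_or_ne r 0 with rfl | hr
  · simp
  · field_simp

lemma integral_Ioi_comp_mul_div_self (f : ℝ → ℝ) {c : ℝ} (hc : 0 < c) (a : ℝ) :
    ∫ r in Ioi a, f (r * c) / r = ∫ u in Ioi (a * c), f u / u := by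
  rw [← integral_comp_mul_right_Ioi' _ _ hc, smul_eq_mul, ← integral_const_mul]
  congr 1 with r
  rcases eq_or_ne r 0 with rfl | hr
  · simp
  · field_simp [hc.ne']

theorem integral_Ioo_add_integral_Ioi_eq_neg_log_add {a : ℝ} (ha : 0 < a) :
    ((∫ r in Ioo (0:ℝ) 1, (exp (-r * a) - 1) / r) + ∫ r in Ioi (1:ℝ), exp (-r * a) / r)
      = -log a + ∫ r in Ioi (0:ℝ), exp (-r) * log r := by
  have hG := integrableOn_exp_neg_mul_log_Ioi
  simp_rw [neg_mul]
  rw [← integral_Ioc_eq_integral_Ioo, ← intervalIntegral.integral_of_le zero_le_one,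
    integral_comp_mul_div_self (fun u => exp (-u) - 1) ha.ne',
    integral_Ioi_comp_mul_div_self (fun u => exp (-u)) ha, zero_mul, one_mul,
    integral_exp_neg_sub_one_div ha, integral_Ioi_exp_neg_div ha,
    ← intervalIntegral.integral_interval_add_Ioi hG (hG.mono_set (Ioi_subset_Ioi ha.le))]
  ring

end LogKernel

theorem log_kernel_identity (n : ℕ) (z : EuclideanSpace ℝ (Fin n)) (hz : z ≠ 0) :
    ((∫ r in Set.Ioo (0:ℝ) 1, (Real.exp (-r * ‖z‖^2) - 1) / r) +
        ∫ r in Set.Ioi (1:ℝ), Real.exp (-r * ‖z‖^2) / r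
      = -Real.log (‖z‖^2) + ∫ r in Set.Ioi (0:ℝ), Real.exp (-r) * Real.log r) ∧
    ((∫ r in Set.Ioo (0:ℝ) 1, (Real.exp (-r * ‖z‖^2) - 1) / r) +
        ∫ r in Set.Ioi (1:ℝ), Real.exp (-r * ‖z‖^2) / r
      = -2 * Real.log ‖z‖ -
          (-(∫ r in Set.Ioi (0:ℝ), Real.exp (-r) * Real.log r))) := by
  have hidentity :=
    LogKernel.integral_Ioo_add_integral_Ioi_eq_neg_log_add (pow_pos (norm_pos_iff.2 hz) 2)
  refine ⟨hidentity, ?_⟩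
  rw [hidentity, Real.log_pow]
  push_cast
  ring
end

section
/- For y > 0 and 0 < s < 1, the function P_y^s(x) = (Γ(n/2+s)/(Γ(s)π^{n/2})) · y^{2s}/(y²+|x|²)^{(n+2s)/2} on ℝⁿ satisfies P_y^s(x) = (y^{2s}/(4^s Γ(s))) ∫₀^∞ e^{-y²/(4t)} G_t(x) t^{-1-s} dt, where G_t(x) = (4πt)^{-n/2} e^{-|x|²/(4t)} is the heat kernel; in particular ∫_{ℝⁿ} P_y^s(x) dx = 1. -/
/-!
The substitution `t ↦ 1/t` turns `∫₀^∞ e^{-a/t} t^{-1-p} dt` into the Gamma integral, with value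
`Γ(p) a^{-p}`. The two exponentials in the integrand combine into `e^{-(y²+|x|²)/(4t)}`, so this
with `a = (y²+|x|²)/4` and `p = n/2 + s` gives the pointwise formula. Integrating it over `x` and
exchanging the integrals (the integrand is nonnegative), `∫ G_t = 1` leaves
`∫₀^∞ e^{-y²/(4t)} t^{-1-s} dt = Γ(s) (y²/4)^{-s}`, which is exactly cancelled by the prefactor.
-/

open MeasureTheory Real Set Module

theorem integral_exp_neg_div_mul_rpow {a p : ℝ} (ha : 0 < a) (hp : 0 < p) :
    ∫ t in Ioi 0, exp (-(a / t)) * t ^ (-1 - p) = Gamma p * a ^ (-p) := by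
  have hsubst : ∀ t ∈ Ioi (0 : ℝ), exp (-(a / t)) * t ^ (-1 - p) =
      (|(-1 : ℝ)| * t ^ ((-1 : ℝ) - 1)) •
        ((t ^ (-1 : ℝ)) ^ (p - 1) * exp (-(a * t ^ (-1 : ℝ)))) := by
    intro t (ht : 0 < t)
    rw [abs_neg, abs_one, one_mul, smul_eq_mul, rpow_neg_one, inv_rpow ht.le, ← rpow_neg ht.le,
      ← div_eq_mul_inv, mul_left_comm, ← mul_assoc, ← rpow_add ht]
    ring_nf
  rw [setIntegral_congr_fun measurableSet_Ioi hsubst,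
    integral_comp_rpow_Ioi (fun u => u ^ (p - 1) * exp (-(a * u))) (by norm_num),
    integral_rpow_mul_exp_neg_mul_Ioi hp ha, one_div, ← rpow_neg_one a, ← rpow_mul ha.le,
    neg_one_mul, mul_comm]

theorem integrableOn_exp_neg_div_mul_rpow {a p : ℝ} (ha : 0 < a) (hp : 0 < p) :
    IntegrableOn (fun t : ℝ => exp (-(a / t)) * t ^ (-1 - p)) (Ioi 0) :=
  Integrable.of_integral_ne_zero <| by
    rw [integral_exp_neg_div_mul_rpow ha hp]
    exact (mul_pos (Gamma_pos_of_pos hp) (by positivity)).ne'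

theorem poissonKernel_eq_integral_heatKernel {d y s r : ℝ} (hy : 0 < y) (hr : 0 ≤ r)
    (hq : 0 < d / 2 + s) :
    Gamma (d / 2 + s) / (Gamma s * π ^ (d / 2)) * (y ^ (2 * s) / (y ^ 2 + r) ^ ((d + 2 * s) / 2)) =
      y ^ (2 * s) / (4 ^ s * Gamma s) *
        ∫ t in Ioi 0, exp (-y ^ 2 / (4 * t)) * ((4 * π * t) ^ (-d / 2) * exp (-r / (4 * t))) *
          t ^ (-1 - s) := by
  have hB : 0 < y ^ 2 + r := by positivity
  have hintegrand : ∀ t ∈ Ioi (0 : ℝ),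
      exp (-y ^ 2 / (4 * t)) * ((4 * π * t) ^ (-d / 2) * exp (-r / (4 * t))) * t ^ (-1 - s) =
        (4 * π) ^ (-d / 2) * (exp (-((y ^ 2 + r) / 4 / t)) * t ^ (-1 - (d / 2 + s))) := by
    intro t (ht : 0 < t)
    have hexp : exp (-y ^ 2 / (4 * t)) * exp (-r / (4 * t)) = exp (-((y ^ 2 + r) / 4 / t)) := by
      rw [← exp_add]; ring_nf
    have hpow : t ^ (-d / 2) * t ^ (-1 - s) = t ^ (-1 - (d / 2 + s)) := by
      rw [← rpow_add ht]; ring_nf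
    rw [mul_rpow (by positivity) ht.le, ← hexp, ← hpow]
    ring
  have hquarter : ((y ^ 2 + r) / 4) ^ (-(d / 2 + s)) =
      4 ^ (d / 2) * 4 ^ s / (y ^ 2 + r) ^ (d / 2 + s) := by
    rw [rpow_neg (by positivity), div_rpow hB.le (by norm_num), inv_div, rpow_add (by norm_num)]
  have hfour_pi : (4 * π) ^ (-d / 2) = (4 ^ (d / 2) * π ^ (d / 2))⁻¹ := by
    rw [neg_div, rpow_neg (by positivity), mul_rpow (by norm_num) pi_pos.le]
  rw [setIntegral_congr_fun measurableSet_Ioi hintegrand, integral_const_mul,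
    integral_exp_neg_div_mul_rpow (by positivity) hq, hquarter, hfour_pi,
    show (d + 2 * s) / 2 = d / 2 + s by ring]
  field_simp

theorem integrable_prod_of_nonneg {α β : Type*} [MeasurableSpace α] [MeasurableSpace β]
    {μ : Measure α} {ν : Measure β} [SFinite μ] [SFinite ν] {f : α × β → ℝ}
    (hf : AEStronglyMeasurable f (μ.prod ν)) (hf₀ : ∀ᵐ b ∂ν, ∀ a, 0 ≤ f (a, b))
    (hsection : ∀ᵐ b ∂ν, Integrable (fun a => f (a, b)) μ)
    (hintegral : Integrable (fun b => ∫ a, f (a, b) ∂μ) ν) :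
    Integrable f (μ.prod ν) := by
  refine (integrable_prod_iff' hf).2 ⟨hsection, hintegral.congr ?_⟩
  filter_upwards [hf₀] with b hb
  simp only [Real.norm_eq_abs, abs_of_nonneg (hb _)]

section HeatKernel

variable {V : Type*} [NormedAddCommGroup V] [InnerProductSpace ℝ V] [FiniteDimensional ℝ V]
  [MeasurableSpace V] [BorelSpace V]

theorem integral_heatKernel_s15 {t : ℝ} (ht : 0 < t) :
    ∫ x : V, (4 * π * t) ^ (-(finrank ℝ V : ℝ) / 2) * exp (-‖x‖ ^ 2 / (4 * t)) = 1 := by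
  have hexp (x : V) : exp (-‖x‖ ^ 2 / (4 * t)) = exp (-(4 * t)⁻¹ * ‖x‖ ^ 2) := by ring_nf
  simp_rw [hexp]
  rw [integral_const_mul, GaussianFourier.integral_rexp_neg_mul_sq_norm (by positivity),
    div_inv_eq_mul, neg_div, rpow_neg (by positivity), show π * (4 * t) = 4 * π * t by ring,
    inv_mul_cancel₀ (by positivity)]

theorem integrable_heatKernel_s15 {t : ℝ} (ht : 0 < t) :
    Integrable fun x : V => (4 * π * t) ^ (-(finrank ℝ V : ℝ) / 2) * exp (-‖x‖ ^ 2 / (4 * t)) :=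
  Integrable.of_integral_ne_zero <| by rw [integral_heatKernel_s15 ht]; exact one_ne_zero

theorem integral_integral_exp_mul_heatKernel {y s : ℝ} (hy : y ≠ 0) (hs : 0 < s) :
    ∫ x : V, ∫ t in Ioi 0, exp (-y ^ 2 / (4 * t)) *
        ((4 * π * t) ^ (-(finrank ℝ V : ℝ) / 2) * exp (-‖x‖ ^ 2 / (4 * t))) * t ^ (-1 - s) =
      Gamma s * (y ^ 2 / 4) ^ (-s) := by
  set F : V × ℝ → ℝ := fun p => exp (-y ^ 2 / (4 * p.2)) *
    ((4 * π * p.2) ^ (-(finrank ℝ V : ℝ) / 2) * exp (-‖p.1‖ ^ 2 / (4 * p.2))) * p.2 ^ (-1 - s)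
  have hy4 : 0 < y ^ 2 / 4 := by positivity
  have hexp (t : ℝ) : -y ^ 2 / (4 * t) = -(y ^ 2 / 4 / t) := by ring
  have hsection : ∀ t ∈ Ioi (0 : ℝ), Integrable (fun x => F (x, t)) :=
    fun t ht => ((integrable_heatKernel_s15 ht).const_mul (exp (-y ^ 2 / (4 * t)))).mul_const
      (t ^ (-1 - s))
  have hsection_integral : ∀ t ∈ Ioi (0 : ℝ),
      ∫ x, F (x, t) = exp (-(y ^ 2 / 4 / t)) * t ^ (-1 - s) := by
    intro t ht
    simp only [F, integral_mul_const, integral_const_mul, integral_heatKernel_s15 ht, mul_one, hexp]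
  have hF : Integrable F (volume.prod (volume.restrict (Ioi 0))) := by
    refine integrable_prod_of_nonneg (by fun_prop) ?_ ?_ ?_
    · filter_upwards [ae_restrict_mem measurableSet_Ioi] with t (ht : 0 < t) x
      positivity
    · exact (ae_restrict_iff' measurableSet_Ioi).2 (ae_of_all _ hsection)
    · exact (integrableOn_exp_neg_div_mul_rpow hy4 hs).congr_fun
        (fun t ht => (hsection_integral t ht).symm) measurableSet_Ioi
  rw [integral_integral_swap hF, setIntegral_congr_fun measurableSet_Ioi hsection_integral,
    integral_exp_neg_div_mul_rpow hy4 hs]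

end HeatKernel

theorem extension_poisson_kernel_general (n : ℕ) (y s : ℝ) (hy : 0 < y) (hs : 0 < s) :
    (∀ x : EuclideanSpace ℝ (Fin n),
      (Real.Gamma ((n:ℝ)/2 + s) / (Real.Gamma s * Real.pi ^ ((n:ℝ)/2))) *
          (y ^ (2*s) / (y^2 + ‖x‖^2) ^ (((n:ℝ) + 2*s)/2))
        = (y ^ (2*s) / (4 ^ s * Real.Gamma s)) *
            ∫ t in Set.Ioi (0:ℝ),
              Real.exp (-y^2 / (4*t)) *
                ((4 * Real.pi * t) ^ (-(n:ℝ)/2) * Real.exp (-‖x‖^2 / (4*t))) *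
                t ^ (-1 - s)) ∧
    (∫ x : EuclideanSpace ℝ (Fin n),
        (Real.Gamma ((n:ℝ)/2 + s) / (Real.Gamma s * Real.pi ^ ((n:ℝ)/2))) *
          (y ^ (2*s) / (y^2 + ‖x‖^2) ^ (((n:ℝ) + 2*s)/2)) = 1) := by
  have hpointwise (x : EuclideanSpace ℝ (Fin n)) :=
    poissonKernel_eq_integral_heatKernel (d := n) hy (sq_nonneg ‖x‖)
      (by positivity : 0 < (n : ℝ) / 2 + s)
  refine ⟨hpointwise, ?_⟩
  have htotal := integral_integral_exp_mul_heatKernel (V := EuclideanSpace ℝ (Fin n)) hy.ne' hs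
  rw [finrank_euclideanSpace_fin] at htotal
  have hy4 : (y ^ 2 / 4) ^ (-s) = 4 ^ s / y ^ (2 * s) := by
    rw [rpow_neg (by positivity), div_rpow (sq_nonneg y) (by norm_num), inv_div,
      ← rpow_natCast, ← rpow_mul hy.le, Nat.cast_ofNat]
  have hGamma : Gamma s ≠ 0 := (Gamma_pos_of_pos hs).ne'
  rw [integral_congr_ae (ae_of_all _ hpointwise), integral_const_mul, htotal, hy4]
  field_simp

theorem extension_poisson_kernel (n : ℕ) (y s : ℝ) (hy : 0 < y) (hs : 0 < s) (hs1 : s < 1) :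
    (∀ x : EuclideanSpace ℝ (Fin n),
      (Real.Gamma ((n:ℝ)/2 + s) / (Real.Gamma s * Real.pi ^ ((n:ℝ)/2))) *
          (y ^ (2*s) / (y^2 + ‖x‖^2) ^ (((n:ℝ) + 2*s)/2))
        = (y ^ (2*s) / (4 ^ s * Real.Gamma s)) *
            ∫ t in Set.Ioi (0:ℝ),
              Real.exp (-y^2 / (4*t)) *
                ((4 * Real.pi * t) ^ (-(n:ℝ)/2) * Real.exp (-‖x‖^2 / (4*t))) *
                t ^ (-1 - s)) ∧
    (∫ x : EuclideanSpace ℝ (Fin n),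
        (Real.Gamma ((n:ℝ)/2 + s) / (Real.Gamma s * Real.pi ^ ((n:ℝ)/2))) *
          (y ^ (2*s) / (y^2 + ‖x‖^2) ^ (((n:ℝ) + 2*s)/2)) = 1) :=
  extension_poisson_kernel_general n y s hy hs
end
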